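/- If μ₁ and μ₂ are both eigenvalues of a 2n×2n setting via the matrix Q(λ), then the 2n×2n block matrix F[Q(μ₁,μ₂);γ] = [[Q(μ₁), 0], [γ·(Q(μ₁)−Q(μ₂))/(μ₁−μ₂), Q(μ₂)]] has rank at most 2n−2; equivalently its two smallest singular values satisfy s_{2n−1}(F[Q(μ₁,μ₂);γ]) = s_{2n}(F[Q(μ₁,μ₂);γ]) = 0. -/

import Mathlib

open Matrix BigOperators

noncomputable def sval {N : ℕ} (A : Matrix (Fin N) (Fin N) ℂ) (k : Fin N) : ℝ :=
  Real.sqrt (((Matrix.isHermitian_conjTranspose_mul_self A).eigenvalues ∘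
    Tuple.sort (Matrix.isHermitian_conjTranspose_mul_self A).eigenvalues) k.rev)

noncomputable def specNorm {𝕜 : Type*} [RCLike 𝕜] {m n : ℕ} (A : Matrix (Fin m) (Fin n) 𝕜) : ℝ :=
  ‖LinearMap.toContinuousLinearMap (Matrix.toEuclideanLin A)‖

noncomputable def Fblk {n : ℕ} (A B C : Matrix (Fin n) (Fin n) ℂ) (γ : ℂ) :
    Matrix (Fin (n + n)) (Fin (n + n)) ℂ :=
  Matrix.reindex finSumFinEquiv finSumFinEquiv (Matrix.fromBlocks A 0 (γ • C) B)

noncomputable def evalMP {n m : ℕ} (A : Fin (m + 1) → Matrix (Fin n) (Fin n) ℂ) (lam : ℂ) :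
    Matrix (Fin n) (Fin n) ℂ :=
  ∑ j : Fin (m + 1), lam ^ (j : ℕ) • A j

def colPair {n : ℕ} (a b : Fin n → ℂ) : Matrix (Fin n) (Fin 2) ℂ :=
  Matrix.of fun i j => ![a i, b i] j

noncomputable def pinvFC {n m : ℕ} (V : Matrix (Fin n) (Fin m) ℂ) : Matrix (Fin m) (Fin n) ℂ :=
  (Vᴴ * V)⁻¹ * Vᴴ

/-! If `Q(μ₁) x = 0` and `Q(μ₂) y = 0` with `x, y ≠ 0`, put `c = γ / (μ₁ - μ₂)`. The off-diagonal
block sends `x` to `-c Q(μ₂) x`, so `(x, c x)` and `(0, y)` are independent kernel vectors of `F`.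
Hence `rank F ≤ 2n - 2`, and the singular values beyond the rank vanish. -/

theorem Matrix.rank_add_le_card_of_mulVec_eq_zero {K ι : Type*} [Field K] [Fintype ι] {k : ℕ}
    (M : Matrix ι ι K) {v : Fin k → ι → K}
    (hv : LinearIndependent K v) (hMv : ∀ i, M *ᵥ v i = 0) :
    M.rank + k ≤ Fintype.card ι := by
  have hspan : Submodule.span K (Set.range v) ≤ LinearMap.ker M.mulVecLin :=
    Submodule.span_le.2 <| Set.range_subset_iff.2 fun i => hMv i
  have hker : k ≤ Module.finrank K (LinearMap.ker M.mulVecLin) := by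
    simpa [finrank_span_eq_card hv] using Submodule.finrank_mono hspan
  have := LinearMap.finrank_range_add_finrank_ker M.mulVecLin
  rw [Module.finrank_fintype_fun_eq_card] at this
  exact (Nat.add_le_add_left hker _).trans this.le

theorem Matrix.fromBlocks_zero₁₂_mulVec_sumElim {K : Type*} [Field K] {m n : Type*}
    [Fintype m] [Fintype n] (A : Matrix m m K) (C : Matrix n m K) (B : Matrix n n K)
    (x : m → K) (w : n → K) :
    fromBlocks A 0 C B *ᵥ Sum.elim x w = Sum.elim (A *ᵥ x) (C *ᵥ x + B *ᵥ w) := by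
  simp [fromBlocks_mulVec]

theorem Matrix.rank_fromBlocks_zero₁₂_add_two_le {K : Type*} [Field K] {m n : Type*}
    [Fintype m] [Fintype n] (A : Matrix m m K) (C : Matrix n m K) (B : Matrix n n K)
    {x : m → K} {w y : n → K} (hx : x ≠ 0) (hAx : A *ᵥ x = 0) (hCx : C *ᵥ x + B *ᵥ w = 0)
    (hy : y ≠ 0) (hBy : B *ᵥ y = 0) :
    (fromBlocks A 0 C B).rank + 2 ≤ Fintype.card m + Fintype.card n := by
  have hind : LinearIndependent K ![Sum.elim x w, Sum.elim 0 y] := by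
    refine LinearIndependent.pair_iff.2 fun s t hst => ?_
    have hs : s = 0 := by
      have hsx : s • x = 0 := funext fun i => by simpa using congrFun hst (Sum.inl i)
      exact (smul_eq_zero.1 hsx).resolve_right hx
    subst hs
    have hty : t • y = 0 := funext fun i => by simpa using congrFun hst (Sum.inr i)
    exact ⟨rfl, (smul_eq_zero.1 hty).resolve_right hy⟩
  simpa using (fromBlocks A 0 C B).rank_add_le_card_of_mulVec_eq_zero hind fun i => by
    fin_cases i <;> simp [fromBlocks_zero₁₂_mulVec_sumElim, hAx, hCx, hBy]

open scoped ComplexOrder in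
theorem sval_eq_zero_of_rank_le {N : ℕ} (M : Matrix (Fin N) (Fin N) ℂ) {k : Fin N}
    (hk : M.rank ≤ k) : sval M k = 0 := by
  set hH := isHermitian_conjTranspose_mul_self M
  set f := hH.eigenvalues ∘ Tuple.sort hH.eigenvalues
  suffices f k.rev = 0 by
    change Real.sqrt (f k.rev) = 0
    rw [this, Real.sqrt_zero]
  have hnonneg : ∀ i, 0 ≤ f i := fun i => eigenvalues_conjTranspose_mul_self_nonneg M _
  have hcard : Fintype.card {i // f i ≠ 0} = M.rank := by
    rw [← rank_conjTranspose_mul_self, hH.rank_eq_card_non_zero_eigs]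
    exact Fintype.card_congr ((Tuple.sort hH.eigenvalues).subtypeEquiv fun _ => Iff.rfl)
  by_contra hne
  have hpos : 0 < f k.rev := (hnonneg _).lt_of_ne' hne
  have hIci : Finset.Ici k.rev ⊆ Finset.univ.filter fun i => f i ≠ 0 := fun i hi =>
    Finset.mem_filter.2 ⟨Finset.mem_univ _,
      (hpos.trans_le (Tuple.monotone_sort hH.eigenvalues (Finset.mem_Ici.1 hi))).ne'⟩
  have := Finset.card_le_card hIci
  rw [Fin.card_Ici, Fin.val_rev, ← Fintype.card_subtype, hcard] at this
  omega

theorem stmt1 {n m : ℕ} (hn : 0 < n) (Q : Fin (m + 1) → Matrix (Fin n) (Fin n) ℂ)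
    (μ₁ μ₂ : ℂ)
    (h1 : (evalMP Q μ₁).det = 0) (h2 : (evalMP Q μ₂).det = 0) (γ : ℂ) :
    (Fblk (evalMP Q μ₁) (evalMP Q μ₂)
        ((μ₁ - μ₂)⁻¹ • (evalMP Q μ₁ - evalMP Q μ₂)) γ).rank ≤ n + n - 2 ∧
    sval (Fblk (evalMP Q μ₁) (evalMP Q μ₂)
        ((μ₁ - μ₂)⁻¹ • (evalMP Q μ₁ - evalMP Q μ₂)) γ) ⟨n + n - 2, by omega⟩ = 0 ∧
    sval (Fblk (evalMP Q μ₁) (evalMP Q μ₂)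
        ((μ₁ - μ₂)⁻¹ • (evalMP Q μ₁ - evalMP Q μ₂)) γ) ⟨n + n - 1, by omega⟩ = 0 := by
  obtain ⟨x, hx, hAx⟩ := exists_mulVec_eq_zero_iff.2 h1
  obtain ⟨y, hy, hBy⟩ := exists_mulVec_eq_zero_iff.2 h2
  have hrank : (Fblk (evalMP Q μ₁) (evalMP Q μ₂)
      ((μ₁ - μ₂)⁻¹ • (evalMP Q μ₁ - evalMP Q μ₂)) γ).rank + 2 ≤ n + n := by
    rw [Fblk, rank_reindex]
    simpa using rank_fromBlocks_zero₁₂_add_two_le _ _ _ (w := (γ * (μ₁ - μ₂)⁻¹) • x) hx hAx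
      (by simp [smul_mulVec, sub_mulVec, mulVec_smul, hAx, smul_smul]) hy hBy
  exact ⟨by omega, sval_eq_zero_of_rank_le _ (by dsimp only; omega),
    sval_eq_zero_of_rank_le _ (by dsimp only; omega)⟩
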